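/- arXiv:2506.04092 — 3 statements merged into one kernel-verified Lean document; each statement's English description precedes it below -/
import Mathlib

section
/- There exists no mechanism for international kidney exchange that is both efficient and individually rational: for every (randomised) mechanism ℳ, if SW(ℳ(I)) = opt(I) holds for every IKEP instance I (efficiency), then there exist an IKEP instance I and a country i with U_i(ℳ(I)) < nat_i(I) (failure of individual rationality). -/
open scoped Classical

/-- An `n`-partitioned compatibility graph: a finite directed graph on a finite
set of natural-number vertices, without self-loops, whose vertex set is
partitioned into `n` nonempty countries. -/
structure PartGraph (n : ℕ) where
  verts : Finset ℕ
  arcs : Finset (ℕ × ℕ)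
  arcs_mem : ∀ p ∈ arcs, p.1 ∈ verts ∧ p.2 ∈ verts
  no_loops : ∀ v, (v, v) ∉ arcs
  country : ℕ → Fin n
  country_nonempty : ∀ i : Fin n, ∃ v ∈ verts, country v = i

/-- Cyclic access to the entries of a list. -/
def cyc (l : List ℕ) (k : ℕ) : ℕ := l.getD (k % l.length) 0

/-- `l` is a (directed) cycle of `G`: a cyclic sequence of at least two distinct
vertices, consecutive ones (cyclically) joined by arcs. -/
def IsCycle {n : ℕ} (G : PartGraph n) (l : List ℕ) : Prop :=
  2 ≤ l.length ∧ l.Nodup ∧ (∀ v ∈ l, v ∈ G.verts) ∧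
    ∀ k < l.length, (cyc l k, cyc l (k + 1)) ∈ G.arcs

/-- All vertices of `l` belong to country `i`. -/
def IsNationalTo {n : ℕ} (G : PartGraph n) (l : List ℕ) (i : Fin n) : Prop :=
  ∀ v ∈ l, G.country v = i

/-- A national cycle: all vertices in one country. -/
def IsNational {n : ℕ} (G : PartGraph n) (l : List ℕ) : Prop :=
  ∃ i, IsNationalTo G l i

/-- An international cycle: not national (equivalently, for cycles, it contains
an international arc). -/
def IsInternational {n : ℕ} (G : PartGraph n) (l : List ℕ) : Prop :=
  ¬ IsNational G l

/-- Position `k` (taken cyclically) is the start of a `V_i`-segment of `l`: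
the vertex there is in country `i` but the cyclically preceding one is not. -/
def segStart {n : ℕ} (G : PartGraph n) (l : List ℕ) (i : Fin n) (k : ℕ) : Prop :=
  G.country (cyc l k) = i ∧ G.country (cyc l (k + l.length - 1)) ≠ i

/-- The size of the run of consecutive (cyclic) positions of `l`, starting at
position `k`, whose vertices are in country `i`.  At a segment start this is
exactly the size of that `V_i`-segment. -/
noncomputable def runLen {n : ℕ} (G : PartGraph n) (l : List ℕ) (i : Fin n) (k : ℕ) : ℕ :=
  ((Finset.range l.length).filter
    fun j => ∀ j' ≤ j, G.country (cyc l (k + j')) = i).card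

/-- The number of `V_i`-segments of the cycle `l`. -/
noncomputable def numSegs {n : ℕ} (G : PartGraph n) (l : List ℕ) (i : Fin n) : ℕ :=
  ((Finset.range l.length).filter fun k => segStart G l i k).card

/-- A set `Γ` of country-specific parameters for `n` countries. -/
structure Params (n : ℕ) where
  icl : ℕ∞
  ncl : Fin n → ℕ∞
  iss : Fin n → ℕ∞
  isn : Fin n → ℕ∞
  icl_ne_one : icl ≠ 1
  ncl_ne_one : ∀ i, ncl i ≠ 1
  iss_pos : ∀ i, 1 ≤ iss i
  isn_pos : ∀ i, 1 ≤ isn i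

/-- `l` is a `Γ`-cycle of `(G, 𝒱)`. -/
def IsGammaCycle {n : ℕ} (G : PartGraph n) (Γ : Params n) (l : List ℕ) : Prop :=
  IsCycle G l ∧
    ((∃ i, IsNationalTo G l i ∧ (l.length : ℕ∞) ≤ Γ.ncl i) ∨
      (IsInternational G l ∧ (l.length : ℕ∞) ≤ Γ.icl ∧
        (∀ i, ∀ k < l.length, segStart G l i k → (runLen G l i k : ℕ∞) ≤ Γ.iss i) ∧
        (∀ i, (numSegs G l i : ℕ∞) ≤ Γ.isn i)))

/-- A cycle packing of `G`: a set of pairwise vertex-disjoint cycles. -/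
def IsPacking {n : ℕ} (G : PartGraph n) (P : Finset (List ℕ)) : Prop :=
  (∀ l ∈ P, IsCycle G l) ∧
    ∀ l ∈ P, ∀ l' ∈ P, l ≠ l' → ∀ v ∈ l, v ∉ l'

/-- The size of a cycle packing: total number of arcs (= vertices) of its cycles. -/
def packSize (P : Finset (List ℕ)) : ℕ := ∑ l ∈ P, l.length

/-- A `Γ`-cycle packing of `(G, 𝒱)`. -/
def IsGammaPackingG {n : ℕ} (G : PartGraph n) (Γ : Params n) (P : Finset (List ℕ)) : Prop :=
  IsPacking G P ∧ ∀ l ∈ P, IsGammaCycle G Γ l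


/-- An IKEP instance `I = ⟨G, 𝒱, Γ⟩`. -/
structure IKEP where
  n : ℕ
  npos : 1 ≤ n
  G : PartGraph n
  prm : Params n

/-- A `Γ`-cycle packing of the instance `I`. -/
def IsGammaPacking (I : IKEP) (P : Finset (List ℕ)) : Prop :=
  IsGammaPackingG I.G I.prm P

/-- The utility `u_i(C)` of country `i` from the cycle `C`: the number of arcs
of `C` entering country `i`, i.e. the number of vertices of `C` in country `i`. -/
noncomputable def cycUtil {n : ℕ} (G : PartGraph n) (i : Fin n) (l : List ℕ) : ℕ :=
  (l.filter fun v => G.country v = i).length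

/-- The utility `u_i(𝒞)` of country `i` from a cycle packing. -/
noncomputable def packUtil {n : ℕ} (G : PartGraph n) (i : Fin n) (P : Finset (List ℕ)) : ℕ :=
  ∑ l ∈ P, cycUtil G i l

/-- `opt(I)`: the maximum size of a `Γ`-cycle packing of `G`. -/
noncomputable def optSize (I : IKEP) : ℕ :=
  sSup {m | ∃ P, IsGammaPacking I P ∧ packSize P = m}

/-- `nat_i(I)`: the maximum size of a `Γ`-cycle packing of the subgraph
`G[V_i]` induced by country `i` (all its cycles are national, so the only
constraint from `Γ` is the national cycle limit `ncl i`). -/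
noncomputable def natSize (I : IKEP) (i : Fin I.n) : ℕ :=
  sSup {m | ∃ P, IsPacking I.G P ∧ (∀ l ∈ P, IsNationalTo I.G l i) ∧
    (∀ l ∈ P, (l.length : ℕ∞) ≤ I.prm.ncl i) ∧ packSize P = m}

/-- A (randomised) mechanism: for every IKEP instance it returns one `Γ`-cycle
packing according to a (finitely supported) probability distribution on the
set `𝒟_I` of all `Γ`-cycle packings of `G`. -/
structure Mechanism where
  dist : IKEP → (Finset (List ℕ) →₀ ℝ)
  nonneg : ∀ I P, 0 ≤ dist I P
  sum_one : ∀ I, ((dist I).sum fun _ p => p) = 1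
  supp : ∀ I P, dist I P ≠ 0 → IsGammaPacking I P

/-- The expected utility `U_i(ℳ(I))` of country `i`. -/
noncomputable def expUtil (M : Mechanism) (I : IKEP) (i : Fin I.n) : ℝ :=
  (M.dist I).sum fun P p => p * (packUtil I.G i P : ℝ)

/-- The expected social welfare `SW(ℳ(I)) = Σ_i U_i(ℳ(I))`: the expected size
of the returned packing. -/
noncomputable def sw (M : Mechanism) (I : IKEP) : ℝ :=
  (M.dist I).sum fun P p => p * (packSize P : ℝ)

/-- Individual rationality. -/
def IndRational (M : Mechanism) : Prop :=
  ∀ I : IKEP, ∀ i : Fin I.n, (natSize I i : ℝ) ≤ expUtil M I i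

/-- Efficiency. -/
def Efficient (M : Mechanism) : Prop :=
  ∀ I : IKEP, sw M I = (optSize I : ℝ)

/-- `Γ' ≤ᵢ Γ`: country `i` misreports by declaring (weakly) smaller
international segment size and segment number; all other parameters agree. -/
def ParamLE {n : ℕ} (i : Fin n) (Γ' Γ : Params n) : Prop :=
  Γ'.icl = Γ.icl ∧ Γ'.ncl = Γ.ncl ∧
    Γ'.iss i ≤ Γ.iss i ∧ Γ'.isn i ≤ Γ.isn i ∧
    (∀ h, h ≠ i → Γ'.iss h = Γ.iss h) ∧ (∀ h, h ≠ i → Γ'.isn h = Γ.isn h)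

/-- Incentive compatibility (with respect to segment size and segment number). -/
def IncentiveCompatible (M : Mechanism) : Prop :=
  ∀ I : IKEP, ∀ i : Fin I.n, ∀ Γ' : Params I.n, ParamLE i Γ' I.prm →
    expUtil M { I with prm := Γ' } i ≤ expUtil M I i

/-- An international `Γ`-cycle of the instance `I`. -/
def IsIntlGammaCycle (I : IKEP) (l : List ℕ) : Prop :=
  IsGammaCycle I.G I.prm l ∧ IsInternational I.G l

/-- `c_int(I)`: the maximum length of an international `Γ`-cycle of `G`. -/
noncomputable def cInt (I : IKEP) : ℕ :=
  sSup {s | ∃ l, IsIntlGammaCycle I l ∧ l.length = s}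



namespace NoIRAux

/-- The counterexample graph: countries `{0,1}` and `{2,3}`. -/
def exG : PartGraph 2 where
  verts := {0, 1, 2, 3}
  arcs := {(0, 1), (1, 0), (0, 2), (2, 3), (3, 0)}
  arcs_mem := by decide
  no_loops := by
    intro v h
    simp only [Finset.mem_insert, Finset.mem_singleton, Prod.mk.injEq] at h
    omega
  country := fun v => if v ≤ 1 then 0 else 1
  country_nonempty := by
    intro i
    fin_cases i
    · exact ⟨0, by decide, rfl⟩
    · exact ⟨2, by decide, rfl⟩

def exP : Params 2 where
  icl := ⊤
  ncl := fun _ => ⊤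
  iss := fun _ => ⊤
  isn := fun _ => ⊤
  icl_ne_one := by simp
  ncl_ne_one := fun _ => by simp
  iss_pos := fun _ => le_top
  isn_pos := fun _ => le_top

def exI : IKEP := ⟨2, by norm_num, exG, exP⟩

lemma mem_arcs {v w : ℕ} (h : (v, w) ∈ exG.arcs) :
    (v = 0 ∧ w = 1) ∨ (v = 1 ∧ w = 0) ∨ (v = 0 ∧ w = 2) ∨ (v = 2 ∧ w = 3) ∨
      (v = 3 ∧ w = 0) := by
  have harcs : exG.arcs = {(0, 1), (1, 0), (0, 2), (2, 3), (3, 0)} := rfl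
  rw [harcs] at h
  simp only [Finset.mem_insert, Finset.mem_singleton, Prod.mk.injEq] at h
  tauto

lemma cyc_congr (l : List ℕ) {a b : ℕ} (h : a % l.length = b % l.length) :
    cyc l a = cyc l b := by unfold cyc; rw [h]

lemma cyc_mem {l : List ℕ} (hl : l ≠ []) (k : ℕ) : cyc l k ∈ l := by
  have h : k % l.length < l.length := Nat.mod_lt _ (List.length_pos_iff.mpr hl)
  rw [cyc, List.getD_eq_getElem l 0 h]
  exact List.getElem_mem h

lemma cyc_inj {l : List ℕ} (hnd : l.Nodup) (hl : l ≠ []) {a b : ℕ}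
    (h : cyc l a = cyc l b) : a % l.length = b % l.length := by
  have hp : 0 < l.length := List.length_pos_iff.mpr hl
  have ha : a % l.length < l.length := Nat.mod_lt _ hp
  have hb : b % l.length < l.length := Nat.mod_lt _ hp
  rw [cyc, cyc, List.getD_eq_getElem l 0 ha, List.getD_eq_getElem l 0 hb] at h
  exact (List.Nodup.getElem_inj_iff hnd).mp h

lemma arc_succ {l : List ℕ} (hc : IsCycle exG l) (k : ℕ) :
    (cyc l k, cyc l (k + 1)) ∈ exG.arcs := by
  obtain ⟨h2, hnd, hv, ha⟩ := hc
  have hp : 0 < l.length := by omega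
  have hk : k % l.length < l.length := Nat.mod_lt _ hp
  have := ha (k % l.length) hk
  have e1 : cyc l (k % l.length) = cyc l k :=
    cyc_congr l (Nat.mod_mod_of_dvd k dvd_rfl)
  have e2 : cyc l (k % l.length + 1) = cyc l (k + 1) :=
    cyc_congr l (((Nat.mod_modEq k l.length).add_right 1))
  rwa [e1, e2] at this

lemma zero_mem {l : List ℕ} (hc : IsCycle exG l) : 0 ∈ l := by
  have hne : l ≠ [] := by
    intro h; rw [h] at hc; exact absurd hc.1 (by simp)
  have m0 : cyc l 0 ∈ l := cyc_mem hne 0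
  have m1 : cyc l 1 ∈ l := cyc_mem hne 1
  have m2 : cyc l 2 ∈ l := cyc_mem hne 2
  have a0 := arc_succ hc 0
  have a1 := arc_succ hc 1
  rw [show (0 : ℕ) + 1 = 1 from rfl] at a0
  rw [show (1 : ℕ) + 1 = 2 from rfl] at a1
  rcases mem_arcs a0 with ⟨h, h'⟩ | ⟨h, h'⟩ | ⟨h, h'⟩ | ⟨h, h'⟩ | ⟨h, h'⟩
  · rw [← h]; exact m0
  · rw [← h']; exact m1
  · rw [← h]; exact m0
  · rcases mem_arcs a1 with ⟨g, g'⟩ | ⟨g, g'⟩ | ⟨g, g'⟩ | ⟨g, g'⟩ | ⟨g, g'⟩ <;>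
      first
        | (exfalso; omega)
        | (rw [← g']; exact m2)
  · rw [← h']; exact m1

lemma dvd_len_of_cyc_eq {l : List ℕ} (hnd : l.Nodup) (hl : l ≠ []) {k d : ℕ}
    (h : cyc l (k + d) = cyc l k) : l.length ∣ d := by
  have h1 := cyc_inj hnd hl h
  have hmod : k ≡ k + d [MOD l.length] := h1.symm
  have h2 := (Nat.modEq_iff_dvd' (Nat.le_add_right k d)).mp hmod
  rwa [Nat.add_sub_cancel_left] at h2

lemma len_eq_two_of_one_mem {l : List ℕ} (hc : IsCycle exG l) (h1 : 1 ∈ l) :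
    l.length = 2 := by
  obtain ⟨h2, hnd, hv, ha⟩ := id hc
  have hne : l ≠ [] := by intro h; rw [h] at h2; simp at h2
  obtain ⟨k, hk, hget⟩ := List.getElem_of_mem h1
  have hck : cyc l k = 1 := by
    rw [cyc, Nat.mod_eq_of_lt hk, List.getD_eq_getElem l 0 hk, hget]
  have a1 := arc_succ hc k
  have a2 := arc_succ hc (k + 1)
  have a3 := arc_succ hc (k + 2)
  have a4 := arc_succ hc (k + 3)
  rw [show k + 1 + 1 = k + 2 from by omega] at a2
  rw [show k + 2 + 1 = k + 3 from by omega] at a3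
  rw [show k + 3 + 1 = k + 4 from by omega] at a4
  -- successor of 1 is 0
  have h10 : cyc l (k + 1) = 0 := by
    rcases mem_arcs a1 with ⟨g, g'⟩ | ⟨g, g'⟩ | ⟨g, g'⟩ | ⟨g, g'⟩ | ⟨g, g'⟩ <;> omega
  -- successor of 0 is 1 or 2
  rcases mem_arcs a2 with ⟨g, g'⟩ | ⟨g, g'⟩ | ⟨g, g'⟩ | ⟨g, g'⟩ | ⟨g, g'⟩
  · -- cyc l (k+2) = 1 = cyc l k
    have heq : cyc l (k + 2) = cyc l k := by rw [g', hck]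
    have hdvd : l.length ∣ 2 := dvd_len_of_cyc_eq hnd hne heq
    have := Nat.le_of_dvd (by norm_num) hdvd
    omega
  · omega
  · -- cyc l (k+2) = 2
    exfalso
    have h23 : cyc l (k + 3) = 3 := by
      rcases mem_arcs a3 with ⟨f, f'⟩ | ⟨f, f'⟩ | ⟨f, f'⟩ | ⟨f, f'⟩ | ⟨f, f'⟩ <;> omega
    have h30 : cyc l (k + 4) = 0 := by
      rcases mem_arcs a4 with ⟨f, f'⟩ | ⟨f, f'⟩ | ⟨f, f'⟩ | ⟨f, f'⟩ | ⟨f, f'⟩ <;> omega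
    have heq : cyc l (k + 1 + 3) = cyc l (k + 1) := by
      rw [show k + 1 + 3 = k + 4 from by omega, h30, h10]
    have hdvd : l.length ∣ 3 := dvd_len_of_cyc_eq hnd hne heq
    have hle : l.length ≤ 3 := Nat.le_of_dvd (by norm_num) hdvd
    have hlen3 : l.length = 3 := by
      have h23 : l.length = 2 ∨ l.length = 3 := by omega
      rcases h23 with h | h
      · rw [h] at hdvd; norm_num at hdvd
      · exact h
    have hcyc3 : cyc l (k + 3) = cyc l k := cyc_congr l (by rw [hlen3]; omega)
    omega
  · omega
  · omega

lemma len_le {l : List ℕ} (hc : IsCycle exG l) : l.length ≤ 3 := by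
  by_cases h1 : 1 ∈ l
  · rw [len_eq_two_of_one_mem hc h1]; omega
  · have hsub : l.toFinset ⊆ ({0, 2, 3} : Finset ℕ) := by
      intro v hv
      rw [List.mem_toFinset] at hv
      have hver : v ∈ exG.verts := hc.2.2.1 v hv
      have hv1 : v ≠ 1 := by rintro rfl; exact h1 hv
      have : exG.verts = {0, 1, 2, 3} := rfl
      rw [this] at hver
      simp only [Finset.mem_insert, Finset.mem_singleton] at hver ⊢
      omega
    have := Finset.card_le_card hsub
    rw [List.toFinset_card_of_nodup hc.2.1] at this
    simpa using this

lemma card_le_one {P : Finset (List ℕ)} (hP : IsPacking exG P) : P.card ≤ 1 := by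
  by_contra h
  push_neg at h
  obtain ⟨a, ha, b, hb, hab⟩ := Finset.one_lt_card.mp h
  exact hP.2 a ha b hb hab 0 (zero_mem (hP.1 a ha)) (zero_mem (hP.1 b hb))

lemma packSize_le {P : Finset (List ℕ)} (hP : IsPacking exG P) : packSize P ≤ 3 := by
  rcases Finset.eq_empty_or_nonempty P with rfl | ⟨l, hl⟩
  · simp [packSize]
  · have hPl : P = {l} :=
      Finset.eq_singleton_iff_unique_mem.mpr
        ⟨hl, fun x hx => Finset.card_le_one.mp (card_le_one hP) x hx l hl⟩
    rw [hPl, packSize, Finset.sum_singleton]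
    exact len_le (hP.1 l hl)

lemma packUtil_of_size_three {P : Finset (List ℕ)} (hP : IsPacking exG P)
    (hs : packSize P = 3) : packUtil exG 0 P = 1 := by
  obtain ⟨l, hl⟩ : P.Nonempty := by
    rcases Finset.eq_empty_or_nonempty P with rfl | h
    · simp [packSize] at hs
    · exact h
  have hPl : P = {l} :=
    Finset.eq_singleton_iff_unique_mem.mpr
      ⟨hl, fun x hx => Finset.card_le_one.mp (card_le_one hP) x hx l hl⟩
  rw [hPl, packSize, Finset.sum_singleton] at hs
  have hc : IsCycle exG l := hP.1 l hl
  have h1 : 1 ∉ l := by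
    intro h1
    rw [len_eq_two_of_one_mem hc h1] at hs
    omega
  have hsub : l.toFinset ⊆ ({0, 2, 3} : Finset ℕ) := by
    intro v hv
    rw [List.mem_toFinset] at hv
    have hver : v ∈ exG.verts := hc.2.2.1 v hv
    have hv1 : v ≠ 1 := by rintro rfl; exact h1 hv
    have hve : exG.verts = {0, 1, 2, 3} := rfl
    rw [hve] at hver
    simp only [Finset.mem_insert, Finset.mem_singleton] at hver ⊢
    omega
  have htf : l.toFinset = ({0, 2, 3} : Finset ℕ) := by
    apply Finset.eq_of_subset_of_card_le hsub
    rw [List.toFinset_card_of_nodup hc.2.1, hs]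
    decide
  have hperm : l.Perm [0, 2, 3] :=
    List.perm_of_nodup_nodup_toFinset_eq hc.2.1 (by decide) (by rw [htf]; decide)
  rw [hPl, packUtil, Finset.sum_singleton, cycUtil]
  rw [(hperm.filter _).length_eq]
  decide

lemma cycle01 : IsCycle exG [0, 1] :=
  ⟨by decide, by decide, by decide, by decide⟩

lemma cycle023 : IsCycle exG [0, 2, 3] :=
  ⟨by decide, by decide, by decide, by decide⟩

lemma natSize_ge : 2 ≤ natSize exI ⟨0, exI.npos⟩ := by
  apply le_csSup
  · refine ⟨3, ?_⟩
    rintro m ⟨P, hP, -, -, rfl⟩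
    exact packSize_le hP
  · refine ⟨{[0, 1]}, ⟨?_, ?_⟩, ?_, ?_, ?_⟩
    · intro l hl
      rw [Finset.mem_singleton] at hl
      rw [hl]; exact cycle01
    · intro l hl l' hl' hne
      rw [Finset.mem_singleton] at hl hl'
      exact absurd (hl.trans hl'.symm) hne
    · intro l hl
      rw [Finset.mem_singleton] at hl
      rw [hl]
      intro v hv
      fin_cases hv <;> rfl
    · intro l hl
      exact le_top
    · rw [packSize, Finset.sum_singleton]; rfl

lemma gammaPacking023 : IsGammaPacking exI {[0, 2, 3]} := by
  constructor
  · constructor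
    · intro l hl
      rw [Finset.mem_singleton] at hl
      rw [hl]; exact cycle023
    · intro l hl l' hl' hne
      rw [Finset.mem_singleton] at hl hl'
      exact absurd (hl.trans hl'.symm) hne
  · intro l hl
    rw [Finset.mem_singleton] at hl
    subst hl
    refine ⟨cycle023, Or.inr ⟨?_, le_top, fun _ _ _ _ => le_top, fun _ => le_top⟩⟩
    rintro ⟨i, hi⟩
    have h0 : exG.country 0 = i := hi 0 (by decide)
    have h2 : exG.country 2 = i := hi 2 (by decide)
    have : exG.country 0 = exG.country 2 := h0.trans h2.symm
    exact absurd this (by decide)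

lemma optSize_eq : optSize exI = 3 := by
  apply le_antisymm
  · apply csSup_le
    · exact ⟨3, {[0, 2, 3]}, gammaPacking023, by rw [packSize, Finset.sum_singleton]; rfl⟩
    · rintro m ⟨P, hP, rfl⟩
      exact packSize_le hP.1
  · apply le_csSup
    · refine ⟨3, ?_⟩
      rintro m ⟨P, hP, rfl⟩
      exact packSize_le hP.1
    · exact ⟨{[0, 2, 3]}, gammaPacking023, by rw [packSize, Finset.sum_singleton]; rfl⟩

end NoIRAux

/-- There is no mechanism that is both efficient and
individually rational: every efficient mechanism fails individual rationality
on some instance and some country. -/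
theorem no_efficient_and_IR (M : Mechanism) (heff : Efficient M) :
    ∃ (I : IKEP) (i : Fin I.n), expUtil M I i < (natSize I i : ℝ) := by
  classical
  refine ⟨NoIRAux.exI, ⟨0, NoIRAux.exI.npos⟩, ?_⟩
  set I := NoIRAux.exI with hI
  have hsw := heff I
  rw [NoIRAux.optSize_eq] at hsw
  set F := M.dist I with hF
  have hsum1 : ∑ P ∈ F.support, F P = 1 := M.sum_one I
  have hswsum : ∑ P ∈ F.support, F P * (packSize P : ℝ) = 3 := by
    have h : sw M I = ∑ P ∈ F.support, F P * (packSize P : ℝ) := rfl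
    rw [h] at hsw
    rw [hsw]; norm_num
  have hle3 : ∀ P ∈ F.support, packSize P ≤ 3 := fun P hP =>
    NoIRAux.packSize_le (M.supp I P (Finsupp.mem_support_iff.mp hP)).1
  have hzero : ∑ P ∈ F.support, F P * (3 - (packSize P : ℝ)) = 0 := by
    have h : ∑ P ∈ F.support, F P * (3 - (packSize P : ℝ)) =
        (∑ P ∈ F.support, F P) * 3 - ∑ P ∈ F.support, F P * (packSize P : ℝ) := by
      rw [Finset.sum_mul, ← Finset.sum_sub_distrib]
      congr 1; ext P; ring
    rw [h, hsum1, hswsum]; ring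
  have hsize3 : ∀ P ∈ F.support, packSize P = 3 := by
    intro P hP
    have hterm := (Finset.sum_eq_zero_iff_of_nonneg ?_).mp hzero P hP
    · have hne : F P ≠ 0 := Finsupp.mem_support_iff.mp hP
      have h3 : (3 : ℝ) - (packSize P : ℝ) = 0 := by
        rcases mul_eq_zero.mp hterm with h | h
        · exact absurd h hne
        · exact h
      have h4 : (packSize P : ℝ) = 3 := by linarith
      exact_mod_cast h4
    · intro Q hQ
      have h1 : 0 ≤ F Q := M.nonneg I Q
      have h2 : (packSize Q : ℝ) ≤ 3 := by exact_mod_cast hle3 Q hQ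
      nlinarith
  have hutil : ∀ P ∈ F.support, packUtil I.G ⟨0, NoIRAux.exI.npos⟩ P = 1 := by
    intro P hP
    exact NoIRAux.packUtil_of_size_three (M.supp I P (Finsupp.mem_support_iff.mp hP)).1
      (hsize3 P hP)
  have hexp : expUtil M I ⟨0, NoIRAux.exI.npos⟩ = 1 := by
    have h : expUtil M I ⟨0, NoIRAux.exI.npos⟩ =
        ∑ P ∈ F.support, F P * (packUtil I.G ⟨0, NoIRAux.exI.npos⟩ P : ℝ) := rfl
    rw [h]
    rw [Finset.sum_congr rfl fun P hP => by rw [hutil P hP]]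
    simp [hsum1]
  rw [hexp]
  have h2le : (2 : ℝ) ≤ (natSize I ⟨0, NoIRAux.exI.npos⟩ : ℝ) := by
    exact_mod_cast NoIRAux.natSize_ge
  linarith
end

section
/- There exists a (randomised) mechanism ℳ that is both maximal and individually rational: for every IKEP instance I = ⟨G,V,Γ⟩, the packing returned by ℳ(I) is with probability 1 a maximal Γ-cycle packing of G, and U_i(ℳ(I)) ≥ nat_i(I) for every country i. -/
open scoped Classical

/-- A maximal `Γ`-cycle packing: not a proper subset of another `Γ`-cycle
packing of `G`. -/
def IsMaximalGammaPacking (I : IKEP) (P : Finset (List ℕ)) : Prop :=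
  IsGammaPacking I P ∧ ∀ Q, IsGammaPacking I Q → P ⊆ Q → Q = P

/-! Fix for every country `i` a maximum packing of national cycles of `V_i` within the limit
`ncl i`. Countries are disjoint, so the union of these packings is a `Γ`-cycle packing; extend
it to a maximal one and return that packing deterministically. Each national cycle of `V_i` gives
country `i` utility equal to its length, so country `i` receives at least `nat_i(I)`. -/

theorem Finset.exists_superset_maximal_of_card_le {α : Type*} {p : Finset α → Prop} {B : ℕ}
    (hB : ∀ t, p t → t.card ≤ B) {s : Finset α} (hs : p s) : ∃ t, s ⊆ t ∧ Maximal p t := by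
  obtain ⟨m, hm⟩ : ∃ m, B - s.card = m := ⟨_, rfl⟩
  induction m using Nat.strong_induction_on generalizing s with
  | _ m ih =>
    by_cases hmax : Maximal p s
    · exact ⟨s, subset_rfl, hmax⟩
    obtain ⟨t, ht, hst⟩ : ∃ t, p t ∧ s ⊂ t := by
      simpa [Maximal, hs, Finset.ssubset_def] using hmax
    have hcard : B - t.card < m := by
      have := Finset.card_lt_card hst
      have := hB t ht
      omega
    obtain ⟨u, htu, hu⟩ := ih _ hcard ht rfl
    exact ⟨u, hst.subset.trans htu, hu⟩

namespace IsPacking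

variable {n : ℕ} {G : PartGraph n} {P : Finset (List ℕ)}

theorem packSize_le_card_verts (hP : IsPacking G P) : packSize P ≤ G.verts.card := by
  have hdisj : (P : Set (List ℕ)).PairwiseDisjoint List.toFinset := by
    intro l hl l' hl' hne
    exact Finset.disjoint_left.mpr fun v hv hv' =>
      hP.2 l hl l' hl' hne v (List.mem_toFinset.mp hv) (List.mem_toFinset.mp hv')
  calc packSize P = ∑ l ∈ P, l.toFinset.card :=
        Finset.sum_congr rfl fun l hl => (List.toFinset_card_of_nodup (hP.1 l hl).2.1).symm
    _ = (P.biUnion List.toFinset).card := (Finset.card_biUnion hdisj).symm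
    _ ≤ G.verts.card := Finset.card_le_card fun v hv => by
        obtain ⟨l, hl, hvl⟩ := Finset.mem_biUnion.mp hv
        exact (hP.1 l hl).2.2.1 v (List.mem_toFinset.mp hvl)

theorem card_le_packSize (hP : IsPacking G P) : P.card ≤ packSize P := by
  rw [Finset.card_eq_sum_ones]
  exact Finset.sum_le_sum fun l hl => by have := (hP.1 l hl).1; omega

theorem card_le_card_verts (hP : IsPacking G P) : P.card ≤ G.verts.card :=
  hP.card_le_packSize.trans hP.packSize_le_card_verts

end IsPacking

theorem exists_maximal_gammaPacking_superset (I : IKEP) {P : Finset (List ℕ)}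
    (hP : IsGammaPacking I P) : ∃ Q, P ⊆ Q ∧ IsMaximalGammaPacking I Q := by
  obtain ⟨Q, hPQ, hQ⟩ :=
    Finset.exists_superset_maximal_of_card_le (fun Q hQ => hQ.1.card_le_card_verts) hP
  exact ⟨Q, hPQ, hQ.1, fun R hR hQR => (hQ.2 hR hQR).antisymm hQR⟩

theorem exists_national_packing_packSize_eq_natSize (I : IKEP) (i : Fin I.n) :
    ∃ P, IsPacking I.G P ∧ (∀ l ∈ P, IsNationalTo I.G l i) ∧
      (∀ l ∈ P, (l.length : ℕ∞) ≤ I.prm.ncl i) ∧ packSize P = natSize I i := by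
  refine Nat.sSup_mem (s := {m | ∃ P, IsPacking I.G P ∧ (∀ l ∈ P, IsNationalTo I.G l i) ∧
    (∀ l ∈ P, (l.length : ℕ∞) ≤ I.prm.ncl i) ∧ packSize P = m})
    ⟨0, ∅, by simp [IsPacking, packSize]⟩ ⟨I.G.verts.card, ?_⟩
  rintro m ⟨P, hP, -, -, rfl⟩
  exact hP.packSize_le_card_verts

theorem isGammaPacking_biUnion_national (I : IKEP) {Pn : Fin I.n → Finset (List ℕ)}
    (hpack : ∀ i, IsPacking I.G (Pn i)) (hnat : ∀ i, ∀ l ∈ Pn i, IsNationalTo I.G l i)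
    (hncl : ∀ i, ∀ l ∈ Pn i, (l.length : ℕ∞) ≤ I.prm.ncl i) :
    IsGammaPacking I (Finset.univ.biUnion Pn) := by
  simp only [IsGammaPacking, IsGammaPackingG, IsPacking, Finset.mem_biUnion, Finset.mem_univ,
    true_and]
  refine ⟨⟨?_, ?_⟩, ?_⟩
  · rintro l ⟨i, hl⟩
    exact (hpack i).1 l hl
  · rintro l ⟨i, hl⟩ l' ⟨j, hl'⟩ hne v hv hv'
    obtain rfl : i = j := (hnat i l hl v hv).symm.trans (hnat j l' hl' v hv')
    exact (hpack i).2 l hl l' hl' hne v hv hv'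
  · rintro l ⟨i, hl⟩
    exact ⟨(hpack i).1 l hl, Or.inl ⟨i, hnat i l hl, hncl i l hl⟩⟩

theorem packUtil_eq_packSize_of_national {n : ℕ} (G : PartGraph n) (i : Fin n)
    {P : Finset (List ℕ)} (hnat : ∀ l ∈ P, IsNationalTo G l i) : packUtil G i P = packSize P :=
  Finset.sum_congr rfl fun l hl => by
    rw [cycUtil, List.filter_eq_self.mpr fun v hv => decide_eq_true (hnat l hl v hv)]

theorem packUtil_mono {n : ℕ} (G : PartGraph n) (i : Fin n) {P Q : Finset (List ℕ)}
    (hPQ : P ⊆ Q) : packUtil G i P ≤ packUtil G i Q :=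
  Finset.sum_le_sum_of_subset hPQ

theorem exists_maximal_gammaPacking_natSize_le_packUtil (I : IKEP) :
    ∃ Q, IsMaximalGammaPacking I Q ∧ ∀ i, natSize I i ≤ packUtil I.G i Q := by
  choose Pn hpack hnat hncl hsize using exists_national_packing_packSize_eq_natSize I
  obtain ⟨Q, hPQ, hQ⟩ :=
    exists_maximal_gammaPacking_superset I (isGammaPacking_biUnion_national I hpack hnat hncl)
  refine ⟨Q, hQ, fun i => ?_⟩
  calc natSize I i = packUtil I.G i (Pn i) := by
        rw [packUtil_eq_packSize_of_national I.G i (hnat i), hsize]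
    _ ≤ packUtil I.G i Q :=
        packUtil_mono I.G i ((Finset.subset_biUnion_of_mem Pn (Finset.mem_univ i)).trans hPQ)

namespace Mechanism

noncomputable def ofPacking (pick : IKEP → Finset (List ℕ))
    (hpick : ∀ I, IsGammaPacking I (pick I)) : Mechanism where
  dist I := Finsupp.single (pick I) 1
  nonneg I P := by
    rcases eq_or_ne P (pick I) with rfl | h
    · simp
    · simp [Finsupp.single_eq_of_ne h]
  sum_one I := by simp
  supp I P hP := by
    obtain rfl : P = pick I := by_contra fun h => hP (Finsupp.single_eq_of_ne h)
    exact hpick I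

variable {pick : IKEP → Finset (List ℕ)} {hpick : ∀ I, IsGammaPacking I (pick I)}

theorem eq_of_ofPacking_dist_ne_zero {I : IKEP} {P : Finset (List ℕ)}
    (hP : (ofPacking pick hpick).dist I P ≠ 0) : P = pick I :=
  by_contra fun h => hP (Finsupp.single_eq_of_ne h)

theorem expUtil_ofPacking (I : IKEP) (i : Fin I.n) :
    expUtil (ofPacking pick hpick) I i = packUtil I.G i (pick I) := by
  simp [expUtil, ofPacking]

end Mechanism

/-- There exists a mechanism that is both maximal (with
probability 1 it returns a maximal `Γ`-cycle packing) and individually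
rational. -/
theorem exists_maximal_and_IR_mechanism :
    ∃ M : Mechanism,
      (∀ I : IKEP, ∀ P, M.dist I P ≠ 0 → IsMaximalGammaPacking I P) ∧
      IndRational M := by
  choose pick hmax hnat using exists_maximal_gammaPacking_natSize_le_packUtil
  refine ⟨Mechanism.ofPacking pick fun I => (hmax I).1, fun I P hP => ?_, fun I i => ?_⟩
  · rw [Mechanism.eq_of_ofPacking_dist_ne_zero hP]
    exact hmax I
  · rw [Mechanism.expUtil_ofPacking]
    exact_mod_cast hnat I i
end

section
/- For every real ε > 0, no individually rational mechanism provides an approximation ratio of at most (1 − ε)·c_int: for every ε > 0 and every individually rational mechanism ℳ there exists an IKEP instance I whose compatibility graph contains at least one international Γ-cycle such that opt(I) > (1 − ε) · c_int(I) · SW(ℳ(I)). -/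
open scoped Classical

/-!
Fix `m` and let country `0` be a ring `0 → 1 → ⋯ → m + 1 → 0`, and country `1` consist of
vertices `m + 2 + j` (`j ≤ m`), each forming a 2-cycle with `j`; `Γ` imposes no restriction.
Country `0` alone can cover its `m + 2` vertices with the ring, so an individually rational
mechanism must give it `m + 2` in expectation. But every packing either stays inside country `0`
or consists of international 2-cycles, which give country `0` at most `m + 1`; hence every packing
satisfies `size + m · u₀ ≤ (m + 2)(m + 1)`, and taking expectations `SW ≤ m + 2`. Since
`opt = 2(m + 1)` and `c_int = 2`, the ratio `opt / SW` tends to `2 = c_int`.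
-/

section Cycles

variable {n : ℕ} {G : PartGraph n} {l : List ℕ}

lemma cyc_mod_length (l : List ℕ) (k : ℕ) : cyc l (k % l.length) = cyc l k := by
  simp [cyc]

lemma cyc_add_length (l : List ℕ) (k : ℕ) : cyc l (k + l.length) = cyc l k := by
  simp [cyc]

lemma cyc_mem (hl : l ≠ []) (k : ℕ) : cyc l k ∈ l := by
  have h : k % l.length < l.length := Nat.mod_lt _ (List.length_pos_iff.2 hl)
  rw [cyc, List.getD_eq_getElem _ _ h]
  exact List.getElem_mem h

lemma exists_cyc_eq {v : ℕ} (hv : v ∈ l) : ∃ k, cyc l k = v := by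
  obtain ⟨k, hk, rfl⟩ := List.getElem_of_mem hv
  exact ⟨k, by rw [cyc, Nat.mod_eq_of_lt hk, List.getD_eq_getElem _ _ hk]⟩

lemma cyc_modEq_of_eq (hnd : l.Nodup) (hl : l ≠ []) {a b : ℕ} (h : cyc l a = cyc l b) :
    a ≡ b [MOD l.length] := by
  have hpos := List.length_pos_iff.2 hl
  have ha : a % l.length < l.length := Nat.mod_lt _ hpos
  have hb : b % l.length < l.length := Nat.mod_lt _ hpos
  rw [cyc, cyc, List.getD_eq_getElem _ _ ha, List.getD_eq_getElem _ _ hb] at h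
  exact (hnd.getElem_inj_iff).mp h

lemma length_eq_two_of_cyc_succ_eq_pred (hnd : l.Nodup) (h2 : 2 ≤ l.length) {k : ℕ}
    (h : cyc l (k + 1) = cyc l (k + l.length - 1)) : l.length = 2 := by
  have hmod := cyc_modEq_of_eq hnd (List.ne_nil_of_length_pos (by omega)) h
  rw [show k + l.length - 1 = (k + 1) + (l.length - 2) by omega] at hmod
  have hdvd : l.length ∣ l.length - 2 := by
    simpa using (Nat.modEq_iff_dvd' (Nat.le_add_right _ _)).mp hmod
  rcases Nat.eq_zero_or_pos (l.length - 2) with h0 | hpos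
  · omega
  · have := Nat.le_of_dvd hpos hdvd; omega

lemma IsCycle.ne_nil (hc : IsCycle G l) : l ≠ [] :=
  List.ne_nil_of_length_pos (by have := hc.1; omega)

lemma IsCycle.cyc_mem_arcs (hc : IsCycle G l) (k : ℕ) : (cyc l k, cyc l (k + 1)) ∈ G.arcs := by
  have h := hc.2.2.2 (k % l.length) (Nat.mod_lt _ (List.length_pos_iff.2 hc.ne_nil))
  have hsucc : cyc l (k % l.length + 1) = cyc l (k + 1) := by
    rw [← cyc_mod_length l (k + 1), ← cyc_mod_length l (k % l.length + 1), Nat.add_mod,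
      Nat.mod_mod, ← Nat.add_mod]
  rwa [cyc_mod_length, hsucc] at h

lemma IsCycle.cyc_pred_mem_arcs (hc : IsCycle G l) (k : ℕ) :
    (cyc l (k + l.length - 1), cyc l k) ∈ G.arcs := by
  have h := hc.cyc_mem_arcs (k + l.length - 1)
  rwa [show k + l.length - 1 + 1 = k + l.length by have := hc.1; omega,
    cyc_add_length] at h

lemma IsCycle.eq_pair_of_forall_arcs (hc : IsCycle G l) {u v : ℕ} (hv : v ∈ l)
    (hout : ∀ w, (v, w) ∈ G.arcs → w = u) (hin : ∀ w, (w, v) ∈ G.arcs → w = u) :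
    l = [v, u] ∨ l = [u, v] := by
  obtain ⟨k, hk⟩ := exists_cyc_eq hv
  have hsucc := hout _ (hk ▸ hc.cyc_mem_arcs k)
  have hpred := hin _ (hk ▸ hc.cyc_pred_mem_arcs k)
  obtain ⟨x, y, rfl⟩ :=
    List.length_eq_two.mp (length_eq_two_of_cyc_succ_eq_pred hc.2.1 hc.1 (hsucc.trans hpred.symm))
  have hxy : (x, y) ∈ G.arcs := by simpa [cyc] using hc.cyc_mem_arcs 0
  rcases List.mem_pair.mp hv with rfl | rfl
  · rw [hout y hxy]; exact Or.inl rfl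
  · rw [hin x hxy]; exact Or.inr rfl

lemma isCycle_pair {a b : ℕ} (hab : (a, b) ∈ G.arcs) (hba : (b, a) ∈ G.arcs) :
    IsCycle G [a, b] := by
  have hne : a ≠ b := fun h => G.no_loops a (h ▸ hab)
  refine ⟨by simp, by simpa using hne, ?_, ?_⟩
  · simpa using ⟨(G.arcs_mem _ hab).1, (G.arcs_mem _ hab).2⟩
  · intro k (hk : k < 2)
    interval_cases k <;> simpa [cyc]

end Cycles

section Packings

variable {n : ℕ} {G : PartGraph n} {P : Finset (List ℕ)}

lemma IsPacking.sum_length_filter_le (hP : IsPacking G P) (q : ℕ → Bool) :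
    ∑ l ∈ P, (l.filter q).length ≤ (G.verts.filter fun v => q v).card := by
  calc ∑ l ∈ P, (l.filter q).length
      = ∑ l ∈ P, (l.filter q).toFinset.card :=
        Finset.sum_congr rfl fun l hl =>
          (List.toFinset_card_of_nodup ((hP.1 l hl).2.1.filter q)).symm
    _ = (P.biUnion fun l => (l.filter q).toFinset).card := by
        refine (Finset.card_biUnion fun x hx y hy hxy => ?_).symm
        simp only [Function.onFun, Finset.disjoint_left, List.mem_toFinset, List.mem_filter]
        exact fun v hv hv' => hP.2 x hx y hy hxy v hv.1 hv'.1
    _ ≤ _ := by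
        refine Finset.card_le_card fun v hv => ?_
        simp only [Finset.mem_biUnion, List.mem_toFinset, List.mem_filter] at hv
        obtain ⟨l, hl, hvl, hq⟩ := hv
        exact Finset.mem_filter.mpr ⟨(hP.1 l hl).2.2.1 v hvl, hq⟩

lemma IsPacking.packSize_le_card (hP : IsPacking G P) : packSize P ≤ G.verts.card := by
  simpa [packSize] using hP.sum_length_filter_le fun _ => true

lemma IsPacking.packUtil_le_card (hP : IsPacking G P) (i : Fin n) :
    packUtil G i P ≤ (G.verts.filter fun v => G.country v = i).card := by
  simpa [packUtil, cycUtil] using hP.sum_length_filter_le fun v => decide (G.country v = i)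

lemma isPacking_singleton {l : List ℕ} (hl : IsCycle G l) : IsPacking G {l} :=
  ⟨by simpa using hl, by simp⟩

lemma cycUtil_zero_add_cycUtil_one (G : PartGraph 2) (l : List ℕ) :
    cycUtil G 0 l + cycUtil G 1 l = l.length := by
  have hone : ∀ v, (G.country v = 1) = ¬ (G.country v = 0) := fun v => by
    apply propext; generalize G.country v = c; fin_cases c <;> simp
  rw [l.length_eq_length_filter_add fun v => decide (G.country v = 0), cycUtil, cycUtil]
  simp only [hone, decide_not]

lemma packSize_eq_packUtil_zero_add_one (G : PartGraph 2) (P : Finset (List ℕ)) :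
    packSize P = packUtil G 0 P + packUtil G 1 P := by
  simp only [packSize, packUtil, ← Finset.sum_add_distrib, cycUtil_zero_add_cycUtil_one]

end Packings

section Optima

variable {I : IKEP} {P : Finset (List ℕ)}

lemma packSize_le_optSize (hP : IsGammaPacking I P) : packSize P ≤ optSize I :=
  le_csSup ⟨I.G.verts.card, by rintro _ ⟨Q, hQ, rfl⟩; exact hQ.1.packSize_le_card⟩
    ⟨P, hP, rfl⟩

lemma packSize_le_natSize {i : Fin I.n} (hP : IsPacking I.G P)
    (hnat : ∀ l ∈ P, IsNationalTo I.G l i)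
    (hncl : ∀ l ∈ P, (l.length : ℕ∞) ≤ I.prm.ncl i) :
    packSize P ≤ natSize I i :=
  le_csSup ⟨I.G.verts.card, by rintro _ ⟨Q, hQ, -, -, rfl⟩; exact hQ.packSize_le_card⟩
    ⟨P, hP, hnat, hncl, rfl⟩

lemma cInt_le {k : ℕ} (h : ∀ l, IsIntlGammaCycle I l → l.length ≤ k) : cInt I ≤ k :=
  csSup_le' <| by rintro _ ⟨l, hl, rfl⟩; exact h l hl

end Optima

def Params.top (n : ℕ) : Params n where
  icl := ⊤
  ncl := fun _ => ⊤
  iss := fun _ => ⊤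
  isn := fun _ => ⊤
  icl_ne_one := by simp
  ncl_ne_one := fun _ => by simp
  iss_pos := fun _ => le_top
  isn_pos := fun _ => le_top

lemma IsCycle.isGammaCycle_top {n : ℕ} {G : PartGraph n} {l : List ℕ} (hl : IsCycle G l) :
    IsGammaCycle G (Params.top n) l := by
  refine ⟨hl, ?_⟩
  by_cases hnat : IsNational G l
  · obtain ⟨i, hi⟩ := hnat
    exact Or.inl ⟨i, hi, le_top⟩
  · exact Or.inr ⟨hnat, le_top, fun _ _ _ _ => le_top, fun _ => le_top⟩

lemma IsPacking.isGammaPackingG_top {n : ℕ} {G : PartGraph n} {P : Finset (List ℕ)}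
    (hP : IsPacking G P) : IsGammaPackingG G (Params.top n) P :=
  ⟨hP, fun l hl => (hP.1 l hl).isGammaCycle_top⟩

namespace Mechanism

variable (M : Mechanism) (I : IKEP)

lemma sw_nonneg : 0 ≤ sw M I :=
  Finset.sum_nonneg fun P _ => mul_nonneg (M.nonneg I P) (Nat.cast_nonneg _)

lemma sw_add_mul_expUtil_le (i : Fin I.n) {a c : ℝ}
    (h : ∀ P, IsGammaPacking I P → (packSize P : ℝ) + a * packUtil I.G i P ≤ c) :
    sw M I + a * expUtil M I i ≤ c := by
  have hsum := M.sum_one I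
  rw [Finsupp.sum] at hsum
  rw [sw, expUtil, Finsupp.sum, Finsupp.sum, Finset.mul_sum, ← Finset.sum_add_distrib]
  calc ∑ P ∈ (M.dist I).support,
        (M.dist I P * packSize P + a * (M.dist I P * packUtil I.G i P))
      = ∑ P ∈ (M.dist I).support, M.dist I P * (packSize P + a * packUtil I.G i P) :=
        Finset.sum_congr rfl fun _ _ => by ring
    _ ≤ ∑ P ∈ (M.dist I).support, M.dist I P * c :=
        Finset.sum_le_sum fun P hP => mul_le_mul_of_nonneg_left
          (h P (M.supp I P (Finsupp.mem_support_iff.mp hP))) (M.nonneg I P)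
    _ = c := by rw [← Finset.sum_mul, hsum, one_mul]

end Mechanism

namespace IRLowerBound

def Arc (m a b : ℕ) : Prop :=
  (a + 1 < m + 2 ∧ b = a + 1) ∨ (a = m + 1 ∧ b = 0) ∨
    (a < m + 1 ∧ b = m + 2 + a) ∨ (m + 2 ≤ a ∧ a < 2 * m + 3 ∧ b = a - (m + 2))

instance (m a b : ℕ) : Decidable (Arc m a b) := by unfold Arc; infer_instance

def graph (m : ℕ) : PartGraph 2 where
  verts := Finset.range (2 * m + 3)
  arcs := (Finset.range (2 * m + 3) ×ˢ Finset.range (2 * m + 3)).filter fun p => Arc m p.1 p.2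
  arcs_mem p hp := by simpa using (Finset.mem_filter.mp hp).1
  no_loops v hv := by have := (Finset.mem_filter.mp hv).2; unfold Arc at this; omega
  country v := if v < m + 2 then 0 else 1
  country_nonempty i := by
    fin_cases i
    · exact ⟨0, by simp, by simp⟩
    · exact ⟨m + 2, by simp; omega, by simp⟩

abbrev ikep (m : ℕ) : IKEP := ⟨2, one_le_two, graph m, Params.top 2⟩

variable {m : ℕ}

lemma mem_arcs {a b : ℕ} : (a, b) ∈ (graph m).arcs ↔ Arc m a b := by
  simp only [graph, Finset.mem_filter, Finset.mem_product, Finset.mem_range,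
    and_iff_right_iff_imp]
  unfold Arc; omega

lemma mem_verts {v : ℕ} : v ∈ (graph m).verts ↔ v < 2 * m + 3 := Finset.mem_range

lemma country_of_lt {v : ℕ} (h : v < m + 2) : (graph m).country v = 0 := if_pos h

lemma country_of_le {v : ℕ} (h : m + 2 ≤ v) : (graph m).country v = 1 := if_neg (by omega)

lemma card_country_zero :
    ((graph m).verts.filter fun v => (graph m).country v = 0).card = m + 2 := by
  rw [← Finset.card_range (m + 2)]
  congr 1
  ext v
  simp only [Finset.mem_filter, mem_verts, Finset.mem_range]
  refine ⟨fun ⟨_, h⟩ => ?_, fun h => ⟨by omega, country_of_lt h⟩⟩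
  by_contra hv
  simp [country_of_le (not_lt.mp hv)] at h

lemma card_country_one :
    ((graph m).verts.filter fun v => (graph m).country v = 1).card = m + 1 := by
  rw [show m + 1 = (Finset.Ico (m + 2) (2 * m + 3)).card by simp; omega]
  congr 1
  ext v
  simp only [Finset.mem_filter, mem_verts, Finset.mem_Ico]
  refine ⟨fun ⟨hv, h⟩ => ⟨?_, hv⟩, fun h => ⟨h.2, country_of_le h.1⟩⟩
  by_contra hv
  simp [country_of_lt (not_le.mp hv)] at h

lemma isCycle_pair_of_lt {j : ℕ} (hj : j < m + 1) : IsCycle (graph m) [j, m + 2 + j] :=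
  isCycle_pair (mem_arcs.mpr (by unfold Arc; omega)) (mem_arcs.mpr (by unfold Arc; omega))

lemma isInternational_pair {j : ℕ} (hj : j < m + 1) :
    IsInternational (graph m) [j, m + 2 + j] := by
  rintro ⟨i, hi⟩
  have h0 := hi j (by simp)
  have h1 := hi (m + 2 + j) (by simp)
  rw [country_of_lt (by omega)] at h0
  rw [country_of_le (by omega), ← h0] at h1
  exact absurd h1 (by decide)

lemma cyc_range (k : ℕ) : cyc (List.range (m + 2)) k = k % (m + 2) := by
  have hk : k % (m + 2) < m + 2 := Nat.mod_lt _ (by omega)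
  rw [cyc, List.length_range, List.getD_eq_getElem _ _ (by simpa using hk), List.getElem_range]

lemma isCycle_range : IsCycle (graph m) (List.range (m + 2)) := by
  refine ⟨by simp, List.nodup_range, fun v hv => mem_verts.mpr ?_, fun k hk => ?_⟩
  · rw [List.mem_range] at hv; omega
  · rw [List.length_range] at hk
    rw [cyc_range, cyc_range, Nat.mod_eq_of_lt hk, mem_arcs]
    by_cases h : k + 1 < m + 2
    · rw [Nat.mod_eq_of_lt h]; exact Or.inl ⟨h, rfl⟩
    · rw [show k + 1 = m + 2 by omega, Nat.mod_self]; exact Or.inr (Or.inl ⟨by omega, rfl⟩)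

-- The country-1 vertex `m + 2 + j` is joined, in both directions, only to `j`.
lemma eq_pair_of_mem_of_le {l : List ℕ} (hc : IsCycle (graph m) l) {v : ℕ} (hv : v ∈ l)
    (hle : m + 2 ≤ v) : ∃ j < m + 1, l = [m + 2 + j, j] ∨ l = [j, m + 2 + j] := by
  have hlt := mem_verts.mp (hc.2.2.1 v hv)
  refine ⟨v - (m + 2), by omega, ?_⟩
  rw [show m + 2 + (v - (m + 2)) = v by omega]
  refine hc.eq_pair_of_forall_arcs hv (fun w hw => ?_) (fun w hw => ?_) <;>
    · have := mem_arcs.mp hw; unfold Arc at this; omega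

lemma length_le_two_of_isInternational {l : List ℕ} (hc : IsCycle (graph m) l)
    (hl : IsInternational (graph m) l) : l.length ≤ 2 := by
  obtain ⟨v, hv, hle⟩ : ∃ v ∈ l, m + 2 ≤ v := by
    by_contra! h
    exact hl ⟨0, fun v hv => country_of_lt (h v hv)⟩
  obtain ⟨j, -, rfl | rfl⟩ := eq_pair_of_mem_of_le hc hv hle <;> simp

lemma eq_succ_mod_of_arc {a b : ℕ} (h : Arc m a b) (ha : a < m + 2) (hb : b < m + 2) :
    b = (a + 1) % (m + 2) := by
  rcases h with ⟨h, rfl⟩ | ⟨rfl, rfl⟩ | ⟨-, rfl⟩ | ⟨h, -⟩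
  · exact (Nat.mod_eq_of_lt h).symm
  · exact (Nat.mod_self _).symm
  all_goals omega

-- Inside country `0` the only arcs are those of the ring `0 → 1 → ⋯ → m + 1 → 0`.
lemma cyc_eq_of_forall_lt {l : List ℕ} (hc : IsCycle (graph m) l)
    (hall : ∀ v ∈ l, v < m + 2) (k : ℕ) : cyc l k = (cyc l 0 + k) % (m + 2) := by
  induction k with
  | zero => rw [add_zero, Nat.mod_eq_of_lt (hall _ (cyc_mem hc.ne_nil 0))]
  | succ k ih =>
    rw [eq_succ_mod_of_arc (mem_arcs.mp (hc.cyc_mem_arcs k)) (hall _ (cyc_mem hc.ne_nil k))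
      (hall _ (cyc_mem hc.ne_nil (k + 1))), ih, Nat.mod_add_mod, add_assoc]

lemma mem_of_forall_lt {l : List ℕ} (hc : IsCycle (graph m) l)
    (hall : ∀ v ∈ l, v < m + 2) {j : ℕ} (hj : j < m + 2) : j ∈ l := by
  have h0 := hall _ (cyc_mem hc.ne_nil 0)
  have := cyc_eq_of_forall_lt hc hall (m + 2 + j - cyc l 0)
  rw [show cyc l 0 + (m + 2 + j - cyc l 0) = j + (m + 2) by omega, Nat.add_mod_right,
    Nat.mod_eq_of_lt hj] at this
  exact this ▸ cyc_mem hc.ne_nil _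

-- A country-`0` cycle is the whole ring, so it meets every international 2-cycle.
lemma national_or_pairs {P : Finset (List ℕ)} (hP : IsPacking (graph m) P) :
    (∀ l ∈ P, ∀ v ∈ l, v < m + 2) ∨
      ∀ l ∈ P, ∃ j < m + 1, l = [m + 2 + j, j] ∨ l = [j, m + 2 + j] := by
  refine or_iff_not_imp_left.mpr fun h => ?_
  obtain ⟨l₀, hl₀, v₀, hv₀, hle₀⟩ : ∃ l ∈ P, ∃ v ∈ l, m + 2 ≤ v := by simpa using h
  obtain ⟨j₀, hj₀, hl₀eq⟩ := eq_pair_of_mem_of_le (hP.1 l₀ hl₀) hv₀ hle₀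
  have hj₀l₀ : j₀ ∈ l₀ := by rcases hl₀eq with rfl | rfl <;> simp
  intro l hl
  by_cases hall : ∀ v ∈ l, v < m + 2
  · have hne : l ≠ l₀ := by rintro rfl; exact absurd (hall v₀ hv₀) (by omega)
    exact absurd hj₀l₀ (hP.2 l hl l₀ hl₀ hne j₀ (mem_of_forall_lt (hP.1 l hl) hall (by omega)))
  · obtain ⟨v, hv, hle⟩ : ∃ v ∈ l, m + 2 ≤ v := by simpa using hall
    exact eq_pair_of_mem_of_le (hP.1 l hl) hv hle

lemma packUtil_one_eq_zero_or_eq {P : Finset (List ℕ)} (hP : IsPacking (graph m) P) :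
    packUtil (graph m) 1 P = 0 ∨ packUtil (graph m) 0 P = packUtil (graph m) 1 P := by
  rcases national_or_pairs hP with hnat | hpairs
  · refine Or.inl (Finset.sum_eq_zero fun l hl => ?_)
    simp +contextual [cycUtil, List.filter_eq_nil_iff, country_of_lt, hnat l hl]
  · refine Or.inr (Finset.sum_congr rfl fun l hl => ?_)
    obtain ⟨j, hj, rfl | rfl⟩ := hpairs l hl <;>
      simp [cycUtil, country_of_lt (m := m) (v := j) (by omega),
        country_of_le (m := m) (v := m + 2 + j)]

lemma packSize_add_mul_packUtil_le {P : Finset (List ℕ)} (hP : IsPacking (graph m) P) :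
    packSize P + m * packUtil (graph m) 0 P ≤ (m + 2) * (m + 1) := by
  have h0 : packUtil (graph m) 0 P ≤ m + 2 := (hP.packUtil_le_card 0).trans_eq card_country_zero
  have h1 : packUtil (graph m) 1 P ≤ m + 1 := (hP.packUtil_le_card 1).trans_eq card_country_one
  rw [packSize_eq_packUtil_zero_add_one]
  rcases packUtil_one_eq_zero_or_eq hP with h | h
  · rw [h]; nlinarith
  · rw [h]; nlinarith

lemma isPacking_pairs :
    IsPacking (graph m) ((Finset.range (m + 1)).image fun j => [j, m + 2 + j]) := by
  refine ⟨fun l hl => ?_, fun l hl l' hl' hne v hv hv' => ?_⟩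
  · obtain ⟨j, hj, rfl⟩ := Finset.mem_image.mp hl
    exact isCycle_pair_of_lt (Finset.mem_range.mp hj)
  · obtain ⟨j, hj, rfl⟩ := Finset.mem_image.mp hl
    obtain ⟨j', hj', rfl⟩ := Finset.mem_image.mp hl'
    simp only [Finset.mem_range] at hj hj'
    simp only [List.mem_cons, List.not_mem_nil, or_false] at hv hv'
    have : j = j' := by omega
    exact hne (by rw [this])

lemma packSize_pairs :
    packSize ((Finset.range (m + 1)).image fun j => [j, m + 2 + j]) = 2 * (m + 1) := by
  rw [packSize, Finset.sum_image fun _ _ _ _ h => (List.cons.inj h).1]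
  simp [mul_comm]

lemma le_natSize_ikep : m + 2 ≤ natSize (ikep m) 0 := by
  simpa [packSize] using packSize_le_natSize (I := ikep m) (i := 0)
    (isPacking_singleton isCycle_range)
    (by simpa [IsNationalTo] using fun v => @country_of_lt m v)
    (fun _ _ => le_top)

lemma le_optSize_ikep : 2 * (m + 1) ≤ optSize (ikep m) :=
  packSize_pairs.symm.trans_le (packSize_le_optSize isPacking_pairs.isGammaPackingG_top)

lemma cInt_ikep_le : cInt (ikep m) ≤ 2 :=
  cInt_le fun _ hl => length_le_two_of_isInternational hl.1.1 hl.2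

lemma isIntlGammaCycle_ikep : IsIntlGammaCycle (ikep m) [0, m + 2] := by
  have hc := isCycle_pair_of_lt (m := m) (j := 0) (by omega)
  exact ⟨hc.isGammaCycle_top, isInternational_pair (by omega)⟩

lemma sw_ikep_le (M : Mechanism) (hIR : IndRational M) : sw M (ikep m) ≤ m + 2 := by
  have hnat : (m + 2 : ℝ) ≤ expUtil M (ikep m) 0 :=
    le_trans (by exact_mod_cast le_natSize_ikep) (hIR (ikep m) 0)
  have hlin := M.sw_add_mul_expUtil_le (ikep m) 0 (a := m) (c := (m + 2) * (m + 1))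
    fun P hP => by exact_mod_cast packSize_add_mul_packUtil_le hP.1
  nlinarith

end IRLowerBound

/-- No individually rational mechanism has an approximation
ratio of at most `(1 - ε)·c_int`, for any `ε > 0`: there is an instance with
an international `Γ`-cycle on which `opt(I) > (1 - ε)·c_int(I)·SW(ℳ(I))`. -/
theorem IR_lower_bound_cInt (ε : ℝ) (hε : 0 < ε) (M : Mechanism)
    (hIR : IndRational M) :
    ∃ I : IKEP, (∃ l, IsIntlGammaCycle I l) ∧
      (1 - ε) * (cInt I : ℝ) * sw M I < (optSize I : ℝ) := by
  obtain ⟨m, hm⟩ := exists_nat_one_div_lt hε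
  have hεm : 1 < ε * (m + 1) := by rwa [div_lt_iff₀ (by positivity)] at hm
  set I := IRLowerBound.ikep m
  refine ⟨I, ⟨_, IRLowerBound.isIntlGammaCycle_ikep⟩, ?_⟩
  have hc : (cInt I : ℝ) ≤ 2 := by exact_mod_cast IRLowerBound.cInt_ikep_le
  have hopt : (2 * (m + 1) : ℝ) ≤ optSize I := by exact_mod_cast IRLowerBound.le_optSize_ikep
  have hsw₀ := M.sw_nonneg I
  have hcsw : (cInt I : ℝ) * sw M I ≤ 2 * (m + 2) :=
    mul_le_mul hc (IRLowerBound.sw_ikep_le M hIR) hsw₀ zero_le_two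
  rw [mul_assoc]
  rcases le_or_gt ε 1 with hε1 | hε1
  · nlinarith [mul_le_mul_of_nonneg_left hcsw (sub_nonneg.mpr hε1)]
  · nlinarith [mul_nonneg (Nat.cast_nonneg (cInt I)) hsw₀]
end
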